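/- Let (X, Y) be an admissible balanced pair in a complete and cocomplete abelian category A. Then (E-dwX̃, (E-dwX̃)⊥) is a hereditary cotorsion pair in Ch(A, E), where E-dwX̃ is the class of complexes with every term in X. Moreover (E-dwX̃)⊥ coincides with the class of complexes C such that every chain map from a complex with terms in X into C is null homotopic. -/

import Mathlib

open CategoryTheory Category Limits ZeroObject

universe v u

namespace Paper

variable {A : Type u} [Category.{v} A] [Abelian A]

/-- Chain complexes over `A` indexed by `ℤ` (homological convention). -/
abbrev Cx (A : Type u) [Category.{v} A] [Abelian A] := ChainComplex A ℤ

/-- A chain map is null homotopic if it is homotopic to the zero map. -/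
def NullHomotopic {X Y : Cx A} (f : X ⟶ Y) : Prop := Nonempty (Homotopy f 0)

/-- A complex is contractible if its identity is null homotopic. -/
def Contractible (X : Cx A) : Prop := Nonempty (Homotopy (𝟙 X) (0 : X ⟶ X))

/-- `Hom_A(X, E)` is exact at degree `n` for every `X ∈ 𝒳`. -/
def RightAcyclicAt (𝒳 : Set A) (E : Cx A) (n : ℤ) : Prop :=
  ∀ ⦃X : A⦄, X ∈ 𝒳 → ∀ g : X ⟶ E.X n, g ≫ E.d n (n - 1) = 0 →
    ∃ h : X ⟶ E.X (n + 1), h ≫ E.d (n + 1) n = g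

/-- The complex `E` is right `𝒳`-acyclic. -/
def RightAcyclic (𝒳 : Set A) (E : Cx A) : Prop := ∀ n : ℤ, RightAcyclicAt 𝒳 E n

/-- `Hom_A(E, Y)` is exact at (cohomological) degree `n` for every `Y ∈ 𝒴`. -/
def LeftAcyclicAt (𝒴 : Set A) (E : Cx A) (n : ℤ) : Prop :=
  ∀ ⦃Y : A⦄, Y ∈ 𝒴 → ∀ g : E.X n ⟶ Y, E.d (n + 1) n ≫ g = 0 →
    ∃ h : E.X (n - 1) ⟶ Y, E.d n (n - 1) ≫ h = g

/-- The complex `E` is left `𝒴`-acyclic. -/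
def LeftAcyclic (𝒴 : Set A) (E : Cx A) : Prop := ∀ n : ℤ, LeftAcyclicAt 𝒴 E n

/-- `f : X ⟶ M` is a right `𝒳`-approximation of `M`. -/
def IsRightApprox (𝒳 : Set A) {X M : A} (f : X ⟶ M) : Prop :=
  ∀ ⦃X' : A⦄, X' ∈ 𝒳 → ∀ g : X' ⟶ M, ∃ h : X' ⟶ X, h ≫ f = g

/-- `f : M ⟶ Y` is a left `𝒴`-approximation of `M`. -/
def IsLeftApprox (𝒴 : Set A) {M Y : A} (f : M ⟶ Y) : Prop :=
  ∀ ⦃Y' : A⦄, Y' ∈ 𝒴 → ∀ g : M ⟶ Y', ∃ h : Y ⟶ Y', f ≫ h = g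

/-- `R` is an augmented `𝒳`-resolution of `M`:  `⋯ → X₁ → X₀ → M → 0`, with the
`𝒳`-objects placed in degrees `≥ 0` and `M` in degree `-1`. -/
def IsAugXRes (𝒳 : Set A) (M : A) (R : Cx A) : Prop :=
  (∀ n : ℤ, 0 ≤ n → R.X n ∈ 𝒳) ∧ (∀ n : ℤ, n < -1 → IsZero (R.X n)) ∧
    Nonempty (R.X (-1) ≅ M)

/-- `R` is an augmented `𝒴`-coresolution of `M`: `0 → M → Y⁰ → Y¹ → ⋯`, with `M` in
degree `0` and the `𝒴`-objects in degrees `≤ -1`. -/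
def IsAugYCores (𝒴 : Set A) (M : A) (R : Cx A) : Prop :=
  (∀ n : ℤ, n ≤ -1 → R.X n ∈ 𝒴) ∧ (∀ n : ℤ, 0 < n → IsZero (R.X n)) ∧
    Nonempty (R.X 0 ≅ M)

/-- A balanced pair `(𝒳, 𝒴)` of (full additive, isomorphism- and summand-closed)
subcategories of `A`. -/
structure BalancedPair (𝒳 𝒴 : Set A) : Prop where
  isoClosedX : ∀ ⦃X X' : A⦄, X ∈ 𝒳 → (X ≅ X') → X' ∈ 𝒳
  isoClosedY : ∀ ⦃Y Y' : A⦄, Y ∈ 𝒴 → (Y ≅ Y') → Y' ∈ 𝒴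
  summandClosedX : ∀ ⦃X S : A⦄, X ∈ 𝒳 → ∀ (s : S ⟶ X) (r : X ⟶ S), s ≫ r = 𝟙 S → S ∈ 𝒳
  summandClosedY : ∀ ⦃Y S : A⦄, Y ∈ 𝒴 → ∀ (s : S ⟶ Y) (r : Y ⟶ S), s ≫ r = 𝟙 S → S ∈ 𝒴
  contravariantlyFinite : ∀ M : A, ∃ X ∈ 𝒳, ∃ f : X ⟶ M, IsRightApprox 𝒳 f
  covariantlyFinite : ∀ M : A, ∃ Y ∈ 𝒴, ∃ f : M ⟶ Y, IsLeftApprox 𝒴 f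
  resolution : ∀ M : A, ∃ R : Cx A, IsAugXRes 𝒳 M R ∧ RightAcyclic 𝒳 R ∧ LeftAcyclic 𝒴 R
  coresolution : ∀ M : A, ∃ R : Cx A, IsAugYCores 𝒴 M R ∧ RightAcyclic 𝒳 R ∧ LeftAcyclic 𝒴 R

/-- The balanced pair `(𝒳, 𝒴)` is admissible: every right `𝒳`-approximation is epic and
every left `𝒴`-approximation is monic. -/
def Admissible (𝒳 𝒴 : Set A) : Prop :=
  (∀ ⦃X M : A⦄, X ∈ 𝒳 → ∀ f : X ⟶ M, IsRightApprox 𝒳 f → Epi f) ∧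
  (∀ ⦃M Y : A⦄, Y ∈ 𝒴 → ∀ f : M ⟶ Y, IsLeftApprox 𝒴 f → Mono f)

/-- A short exact sequence of `A` belonging to the exact structure `E` induced by `𝒳`:
it is exact and remains exact after applying `Hom_A(X, -)` for every `X ∈ 𝒳`. -/
def EExact (𝒳 : Set A) {D W C : A} (i : D ⟶ W) (p : W ⟶ C) : Prop :=
  ∃ w : i ≫ p = 0, (ShortComplex.mk i p w).ShortExact ∧
    ∀ ⦃X : A⦄, X ∈ 𝒳 → ∀ g : X ⟶ C, ∃ h : X ⟶ W, h ≫ p = g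

/-- A short exact sequence of complexes which is degreewise in `E`. -/
def ChEExact (𝒳 : Set A) {D W C : Cx A} (i : D ⟶ W) (p : W ⟶ C) : Prop :=
  ∀ n : ℤ, EExact 𝒳 (i.f n) (p.f n)

/-- Vanishing of `Ext¹` in the exact category `Ch(A, E)`: every admissible short exact
sequence `0 → D → W → C → 0` in `Ch(A, E)` splits. -/
def Ext1ChVanish (𝒳 : Set A) (C D : Cx A) : Prop :=
  ∀ ⦃W : Cx A⦄ (i : D ⟶ W) (p : W ⟶ C), ChEExact 𝒳 i p → ∃ r : W ⟶ D, i ≫ r = 𝟙 D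

/-- The class `Ẽ` of right `𝒳`-acyclic complexes. -/
def Etilde (𝒳 : Set A) : Set (Cx A) := {E | RightAcyclic 𝒳 E}

/-- The class `E-dw X̃` of complexes with all terms in `𝒳`. -/
def dwX (𝒳 : Set A) : Set (Cx A) := {G | ∀ n : ℤ, G.X n ∈ 𝒳}

/-- The class `E-dg X̃`: complexes with terms in `𝒳` such that every chain map to a right
`𝒳`-acyclic complex is null homotopic. -/
def EdgX (𝒳 : Set A) : Set (Cx A) :=
  {G | (∀ n : ℤ, G.X n ∈ 𝒳) ∧ ∀ E ∈ Etilde 𝒳, ∀ f : G ⟶ E, NullHomotopic f}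

/-- The right `Ext¹`-orthogonal class of `E-dw X̃` in `Ch(A, E)`. -/
def dwPerp (𝒳 : Set A) : Set (Cx A) := {C | ∀ G ∈ dwX 𝒳, Ext1ChVanish 𝒳 G C}

/-- The class `X̃_E` of right `𝒳`-acyclic complexes all of whose cycles lie in `𝒳`. -/
def XtildeE (𝒳 : Set A) : Set (Cx A) :=
  {G | RightAcyclic 𝒳 G ∧ ∀ n : ℤ, kernel (G.d n (n - 1)) ∈ 𝒳}

/-- The disk complex `Dⁿ(M)`: `M` in degrees `n` and `n - 1`, identity differential. -/
noncomputable def disk (M : A) (n : ℤ) : Cx A where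
  X k := if k = n ∨ k = n - 1 then M else 0
  d i j :=
    if h : i = n ∧ j = n - 1 then
      eqToHom (by simp [h.1, h.2])
    else 0
  shape i j hij := by
    try dsimp only
    rw [dif_neg]
    rintro ⟨rfl, rfl⟩
    exact hij (by rw [ComplexShape.down_Rel]; omega)
  d_comp_d' i j k _ _ := by
    try dsimp only
    by_cases h : j = n ∧ k = n - 1
    · rw [dif_neg (by rintro ⟨-, rfl⟩; omega : ¬(i = n ∧ j = n - 1)), zero_comp]
    · rw [dif_neg h, comp_zero]

/-- The shift `Σᵏ C`, with `(Σᵏ C)ₙ = C_{n-k}` and differential `(-1)ᵏ d`. -/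
@[simps] def shiftC (C : Cx A) (k : ℤ) : Cx A where
  X n := C.X (n - k)
  d i j := (k.negOnePow : ℤ) • C.d (i - k) (j - k)
  shape i j hij := by
    try dsimp only
    rw [C.shape, smul_zero]
    simp only [ComplexShape.down_Rel] at *
    omega
  d_comp_d' i j k _ _ := by
    try dsimp only
    rw [Preadditive.zsmul_comp, Preadditive.comp_zsmul, C.d_comp_d, smul_zero, smul_zero]

/-- Acyclicity of a complex. -/
def AcyclicCx (C : Cx A) : Prop := ∀ n : ℤ, C.ExactAt n

/-- Vanishing of the ordinary `Ext¹` in the abelian category `A`. -/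
def Ext1Vanish (X Z : A) : Prop :=
  ∀ ⦃W : A⦄ (i : Z ⟶ W) (p : W ⟶ X) (w : i ≫ p = 0),
    (ShortComplex.mk i p w).ShortExact → ∃ r : W ⟶ Z, i ≫ r = 𝟙 Z

/-- `(𝒻, 𝒞)` is a cotorsion pair in the abelian category `A`. -/
def CotorsionPair (𝒻 𝒞 : Set A) : Prop :=
  (∀ X : A, X ∈ 𝒻 ↔ ∀ Z ∈ 𝒞, Ext1Vanish X Z) ∧
  (∀ Z : A, Z ∈ 𝒞 ↔ ∀ X ∈ 𝒻, Ext1Vanish X Z)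

/-- Completeness of a cotorsion pair. -/
def CompletePair (𝒻 𝒞 : Set A) : Prop :=
  (∀ M : A, ∃ (Z F : A) (i : Z ⟶ F) (p : F ⟶ M) (w : i ≫ p = 0),
      (ShortComplex.mk i p w).ShortExact ∧ F ∈ 𝒻 ∧ Z ∈ 𝒞) ∧
  (∀ M : A, ∃ (Z F : A) (i : M ⟶ Z) (p : Z ⟶ F) (w : i ≫ p = 0),
      (ShortComplex.mk i p w).ShortExact ∧ Z ∈ 𝒞 ∧ F ∈ 𝒻)

/-- Heredity of a cotorsion pair. -/
def HereditaryPair (𝒻 𝒞 : Set A) : Prop :=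
  (∀ ⦃X Y Z : A⦄ (i : X ⟶ Y) (p : Y ⟶ Z) (w : i ≫ p = 0),
      (ShortComplex.mk i p w).ShortExact → Y ∈ 𝒻 → Z ∈ 𝒻 → X ∈ 𝒻) ∧
  (∀ ⦃X Y Z : A⦄ (i : X ⟶ Y) (p : Y ⟶ Z) (w : i ≫ p = 0),
      (ShortComplex.mk i p w).ShortExact → X ∈ 𝒞 → Y ∈ 𝒞 → Z ∈ 𝒞)

/-- A complete hereditary cotorsion triple `(𝒳, 𝒵, 𝒴)`. -/
def CotorsionTriple (𝒳 𝒵 𝒴 : Set A) : Prop :=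
  CotorsionPair 𝒳 𝒵 ∧ CotorsionPair 𝒵 𝒴 ∧
  CompletePair 𝒳 𝒵 ∧ CompletePair 𝒵 𝒴 ∧
  HereditaryPair 𝒳 𝒵 ∧ HereditaryPair 𝒵 𝒴


/-!
Ext¹ in `Ch(A, E)` against a complex `G` with terms in `𝒳` is computed from degreewise lifts.
Given a degreewise `E`-exact `0 → Z → W → Q → 0` and `f : G → Q`, lift `f` degreewise; the
failure of the lift to be a chain map is a chain map `Σ⁻¹G → Z`, and a null homotopy of it
corrects the lift. So if every map from a complex with terms in `𝒳` into `C` is null homotopic,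
`C` lies in `(E-dw X̃)^⊥`. Conversely, for `C` in `(E-dw X̃)^⊥` a retraction of
`C → cone f ↠ ΣG` makes `f : G → C` null homotopic.

Disks are contractible, hence lie in `(E-dw X̃)^⊥`. If `G` is left orthogonal to all of them,
take an epic right `𝒳`-approximation `X → Gₙ` with kernel `K`: the pullback of
`Dⁿ⁺¹X → Dⁿ⁺¹Gₙ ← G` is an extension of `G` by `Dⁿ⁺¹K` which in degree `n` is the
approximation sequence, so its splitting splits the approximation and `Gₙ ∈ 𝒳`. For heredity,
degreewise `E`-exact sequences ending in `𝒳` split, and lifting maps through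
`0 → C' → C → C'' → 0` shows that `(E-dw X̃)^⊥` is closed under cokernels.
-/

section EExact

variable {𝒳 : Set A} {D W C : A} {i : D ⟶ W} {p : W ⟶ C}

lemma EExact.w (h : EExact 𝒳 i p) : i ≫ p = 0 := h.choose

lemma EExact.shortExact (h : EExact 𝒳 i p) : (ShortComplex.mk i p h.w).ShortExact :=
  h.choose_spec.1

lemma EExact.exists_lift (h : EExact 𝒳 i p) {T : A} (hT : T ∈ 𝒳) (g : T ⟶ C) :
    ∃ g' : T ⟶ W, g' ≫ p = g :=
  h.choose_spec.2 hT g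

lemma EExact.exists_factor_of_comp_eq_zero (h : EExact 𝒳 i p) {T : A} (q : T ⟶ W)
    (hq : q ≫ p = 0) : ∃ t : T ⟶ D, t ≫ i = q :=
  have := h.shortExact.mono_f
  h.shortExact.exact.lift' q hq

lemma EExact.exists_retraction (h : EExact 𝒳 i p) (hC : C ∈ 𝒳) : ∃ r : W ⟶ D, i ≫ r = 𝟙 D :=
  have ⟨s, hs⟩ := h.exists_lift hC (𝟙 C)
  ⟨_, (ShortComplex.Splitting.ofExactOfSection _ h.shortExact.exact s hs
    h.shortExact.mono_f).f_r⟩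

lemma eexact_of_splitting {S : ShortComplex A} (σ : S.Splitting) : EExact 𝒳 S.f S.g :=
  ⟨S.zero, σ.shortExact, fun _ _ g => ⟨g ≫ σ.s, by simp⟩⟩

lemma eexact_of_isZero (hD : IsZero D) (hW : IsZero W) (hC : IsZero C) : EExact 𝒳 i p :=
  eexact_of_splitting (S := ShortComplex.mk i p (hD.eq_of_src _ _))
    { r := 0, s := 0, f_r := hD.eq_of_src _ _, s_g := hC.eq_of_src _ _, id := hW.eq_of_src _ _ }

lemma eexact_kernel_ι {X M : A} (f : X ⟶ M) [Epi f] (hf : IsRightApprox 𝒳 f) :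
    EExact 𝒳 (kernel.ι f) f :=
  ⟨kernel.condition f, ⟨ShortComplex.exact_of_f_is_kernel _ (kernelIsKernel f)⟩, hf⟩

lemma EExact.of_iso (h : EExact 𝒳 i p) {D' W' C' : A} (e₁ : D' ≅ D) (e₂ : W' ≅ W)
    (e₃ : C' ≅ C) : EExact 𝒳 (e₁.hom ≫ i ≫ e₂.inv) (e₂.hom ≫ p ≫ e₃.inv) := by
  refine ⟨by simp [reassoc_of% h.w], ShortComplex.shortExact_of_iso
    (ShortComplex.isoMk e₁.symm e₂.symm e₃.symm (by simp) (by simp)) h.shortExact,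
    fun T hT g => ?_⟩
  obtain ⟨ℓ, hℓ⟩ := h.exists_lift hT (g ≫ e₃.hom)
  exact ⟨ℓ ≫ e₂.inv, by simp [reassoc_of% hℓ]⟩

lemma EExact.of_isPullback (h : EExact 𝒳 i p) {P Y : A} {fst : P ⟶ Y} {snd : P ⟶ W}
    {a : Y ⟶ C} (sq : IsPullback fst snd a p) {κ : D ⟶ P} (hκ₁ : κ ≫ fst = 0)
    (hκ₂ : κ ≫ snd = i) : EExact 𝒳 κ fst := by
  have := h.shortExact.mono_f
  have := h.shortExact.epi_g
  have : Mono κ := mono_of_mono_fac hκ₂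
  have : Epi fst := Abelian.epi_fst_of_isLimit a p sq.isLimit
  have hker : ∀ {T : A} (t : T ⟶ P), t ≫ fst = 0 → ∃ l : T ⟶ D, l ≫ κ = t := by
    intro T t ht
    obtain ⟨l, hl⟩ := h.exists_factor_of_comp_eq_zero (t ≫ snd) (by simp [← sq.w, reassoc_of% ht])
    exact ⟨l, sq.hom_ext (by simp [ht, hκ₁]) (by simpa [hκ₂] using hl)⟩
  refine ⟨hκ₁, ⟨ShortComplex.exact_of_f_is_kernel _ (KernelFork.IsLimit.ofι' κ hκ₁
    fun t ht => ⟨_, (hker t ht).choose_spec⟩)⟩, fun T hT g => ?_⟩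
  obtain ⟨ℓ, hℓ⟩ := h.exists_lift hT (g ≫ a)
  exact ⟨sq.lift g ℓ hℓ.symm, sq.lift_fst _ _ _⟩

end EExact

section Complexes

open HomologicalComplex

variable {𝒳 : Set A}

lemma ChEExact.w {Z W Q : Cx A} {i : Z ⟶ W} {p : W ⟶ Q} (h : ChEExact 𝒳 i p) : i ≫ p = 0 := by
  ext n
  exact (h n).w

lemma ChEExact.shortExact {Z W Q : Cx A} {i : Z ⟶ W} {p : W ⟶ Q} (h : ChEExact 𝒳 i p) :
    (ShortComplex.mk i p h.w).ShortExact :=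
  shortExact_of_degreewise_shortExact _ fun n => (h n).shortExact

lemma shiftC_mem_dwX {G : Cx A} (hG : G ∈ dwX 𝒳) (k : ℤ) : shiftC G k ∈ dwX 𝒳 :=
  fun n => hG (n - k)

-- `Σ⁻¹ G`, indexed by `n + 1` rather than by the `n - -1` of `shiftC G (-1)`.
@[simps] def desusp (G : Cx A) : Cx A where
  X n := G.X (n + 1)
  d a b := -G.d (a + 1) (b + 1)
  shape a b h := by rw [G.shape _ _ (by simp at h ⊢; omega), neg_zero]
  d_comp_d' a b c _ _ := by simp

lemma desusp_mem_dwX {G : Cx A} (hG : G ∈ dwX 𝒳) : desusp G ∈ dwX 𝒳 :=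
  fun n => hG (n + 1)

lemma exists_eq_of_nullHomotopic_desusp {G Z : Cx A} {u : desusp G ⟶ Z}
    (hu : NullHomotopic u) : ∃ σ : ∀ n, G.X n ⟶ Z.X n, ∀ n : ℤ,
      u.f n = -(G.d (n + 1) n ≫ σ n) + σ (n + 1) ≫ Z.d (n + 1) n := by
  obtain ⟨H⟩ := hu
  have reindex : ∀ m k (h : m = k), (G.XIsoOfEq (show m + 1 = k + 1 by omega)).hom ≫
      H.hom k (m + 1) = H.hom m (m + 1) := by
    rintro m k rfl
    exact id_comp _
  refine ⟨fun n => (G.XIsoOfEq (by omega : n = n - 1 + 1)).hom ≫ H.hom (n - 1) n, fun n => ?_⟩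
  rw [H.comm n, dNext_eq H.hom (show (ComplexShape.down ℤ).Rel n (n - 1) by simp),
    prevD_eq H.hom (show (ComplexShape.down ℤ).Rel (n + 1) n by simp)]
  dsimp only
  rw [reindex n (n + 1 - 1) (by omega)]
  simp only [zero_f, add_zero, desusp_d]
  rw [← G.d_comp_XIsoOfEq_hom (show n = n - 1 + 1 by omega)]
  exact congrArg (· + _) ((Preadditive.neg_comp _ _).trans (congrArg Neg.neg (assoc _ _ _)))

section Lifting

variable {Z W Q : Cx A} {i : Z ⟶ W} {p : W ⟶ Q}

lemma ChEExact.exists_obstruction (hEE : ChEExact 𝒳 i p) {G : Cx A} (f : G ⟶ Q)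
    (s : ∀ n, G.X n ⟶ W.X n) (hs : ∀ n, s n ≫ p.f n = f.f n) : ∃ θ : desusp G ⟶ Z,
      ∀ n, θ.f n ≫ i.f n = G.d (n + 1) n ≫ s n - s (n + 1) ≫ W.d (n + 1) n := by
  have hτ : ∀ n, (G.d (n + 1) n ≫ s n - s (n + 1) ≫ W.d (n + 1) n) ≫ p.f n = 0 := fun n => by
    rw [Preadditive.sub_comp, assoc, assoc, hs, ← p.comm, reassoc_of% (hs (n + 1)), f.comm,
      sub_self]
  choose θ hθ using fun n => (hEE n).exists_factor_of_comp_eq_zero _ (hτ n)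
  refine ⟨{ f := θ, comm' := ?_ }, hθ⟩
  rintro a b hab
  obtain rfl : a = b + 1 := by simp at hab; omega
  have := (hEE b).shortExact.mono_f
  rw [← cancel_mono (i.f b)]
  show (θ (b + 1) ≫ Z.d (b + 1) b) ≫ i.f b = ((-G.d (b + 1 + 1) (b + 1)) ≫ θ b) ≫ i.f b
  rw [assoc, assoc, ← i.comm, reassoc_of% (hθ (b + 1)), hθ b]
  simp

lemma ChEExact.exists_lift_of_nullHomotopic (hEE : ChEExact 𝒳 i p) {G : Cx A}
    (hG : G ∈ dwX 𝒳) (f : G ⟶ Q) (hZ : ∀ u : desusp G ⟶ Z, NullHomotopic u) :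
    ∃ g : G ⟶ W, g ≫ p = f := by
  choose s hs using fun n => (hEE n).exists_lift (hG n) (f.f n)
  obtain ⟨θ, hθ⟩ := hEE.exists_obstruction f s hs
  obtain ⟨σ, hσ⟩ := exists_eq_of_nullHomotopic_desusp (hZ θ)
  refine ⟨{ f := fun n => s n + σ n ≫ i.f n, comm' := ?_ }, ?_⟩
  · rintro a b hab
    obtain rfl : a = b + 1 := by simp at hab; omega
    have h : (-(G.d (b + 1) b ≫ σ b) + σ (b + 1) ≫ Z.d (b + 1) b) ≫ i.f b =
        G.d (b + 1) b ≫ s b - s (b + 1) ≫ W.d (b + 1) b :=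
      (congrArg (· ≫ i.f b) (hσ b)).symm.trans (hθ b)
    rw [Preadditive.add_comp, Preadditive.neg_comp, assoc, assoc] at h
    simp only [Preadditive.add_comp, Preadditive.comp_add, assoc, i.comm, eq_sub_of_add_eq' h]
    abel
  · ext n
    simp [hs, (hEE n).w]

end Lifting

lemma ext1ChVanish_of_forall_nullHomotopic {C : Cx A}
    (hC : ∀ G ∈ dwX 𝒳, ∀ f : G ⟶ C, NullHomotopic f) {G : Cx A} (hG : G ∈ dwX 𝒳) :
    Ext1ChVanish 𝒳 G C := by
  intro W i p hEE
  obtain ⟨s, hs⟩ := hEE.exists_lift_of_nullHomotopic hG (𝟙 G) (hC _ (desusp_mem_dwX hG))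
  exact ⟨_, (ShortComplex.Splitting.ofExactOfSection _ hEE.shortExact.exact s hs
    hEE.shortExact.mono_f).f_r⟩

noncomputable def homotopyCofiberToShift {G C : Cx A} (f : G ⟶ C) :
    homotopyCofiber f ⟶ shiftC G 1 where
  f n := homotopyCofiber.fstX f n (n - 1) (by simp)
  comm' a b hab := by
    obtain rfl : a - 1 = b := by simp at hab; omega
    refine Eq.trans ?_ (homotopyCofiber.d_fstX f a (a - 1) (a - 1 - 1) hab (by simp)).symm
    simp only [shiftC_d, Int.negOnePow_one, Units.val_neg, Units.val_one, neg_smul, one_smul]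
    exact Preadditive.comp_neg _ _

lemma chEExact_inr_homotopyCofiberToShift {G C : Cx A} (f : G ⟶ C) :
    ChEExact 𝒳 (homotopyCofiber.inr f) (homotopyCofiberToShift f) := fun n =>
  eexact_of_splitting (S := ShortComplex.mk (homotopyCofiber.inrX f n)
      (homotopyCofiber.fstX f n (n - 1) (by simp)) (by simp))
    { r := homotopyCofiber.sndX f n
      s := homotopyCofiber.inlX f (n - 1) n (by simp)
      f_r := by simp
      s_g := by simp
      id := homotopyCofiber.ext_to_X f n (n - 1) (by simp) (by simp) (by simp) }

lemma nullHomotopic_of_mem_dwPerp {C : Cx A} (hC : C ∈ dwPerp 𝒳) {G : Cx A}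
    (hG : G ∈ dwX 𝒳) (f : G ⟶ C) : NullHomotopic f := by
  obtain ⟨r, hr⟩ := hC _ (shiftC_mem_dwX hG 1) _ _ (chEExact_inr_homotopyCofiberToShift f)
  exact ⟨.trans (.ofEq (by simp [hr]))
    (((homotopyCofiber.inrCompHomotopy f fun n => ⟨n + 1, by simp⟩).compRight r).trans
      (.ofEq (by simp)))⟩

noncomputable def diskXIso (M : A) (k m : ℤ) (h : m = k ∨ m = k - 1) : (disk M k).X m ≅ M :=
  eqToIso (if_pos h)

lemma isZero_disk_X (M : A) (k m : ℤ) (h : ¬(m = k ∨ m = k - 1)) :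
    IsZero ((disk M k).X m) :=
  (isZero_zero A).of_iso (eqToIso (if_neg h))

lemma disk_d {M : A} {k a b : ℤ} (ha : a = k) (hb : b = k - 1) :
    (disk M k).d a b = (diskXIso M k a (.inl ha)).hom ≫ (diskXIso M k b (.inr hb)).inv := by
  subst ha hb
  simp [disk, diskXIso]

lemma disk_d_eq_zero (M : A) {k a : ℤ} (ha : a ≠ k) (b : ℤ) : (disk M k).d a b = 0 :=
  dif_neg fun h => ha h.1

lemma disk_contractible (M : A) (k : ℤ) : Contractible (disk M k) := by
  refine ⟨{ hom i j := if h : i = k - 1 ∧ j = k then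
              (diskXIso M k i (.inr h.1)).hom ≫ (diskXIso M k j (.inl h.2)).inv else 0
            zero i j hij := dif_neg fun h => hij (by simp; omega)
            comm n := ?_ }⟩
  rw [dNext_eq _ (show (ComplexShape.down ℤ).Rel n (n - 1) by simp),
    prevD_eq _ (show (ComplexShape.down ℤ).Rel (n + 1) n by simp)]
  by_cases h₁ : n = k
  · subst h₁
    simp [disk_d rfl rfl]
  · by_cases h₂ : n = k - 1
    · simp [disk_d_eq_zero _ h₁, disk_d (by omega : n + 1 = k) h₂, h₂]
    · exact (isZero_disk_X M k n (by omega)).eq_of_src _ _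

lemma nullHomotopic_of_contractible {X Y : Cx A} (hY : Contractible Y) (f : X ⟶ Y) :
    NullHomotopic f :=
  have ⟨H⟩ := hY
  ⟨(Homotopy.ofEq (comp_id f).symm).trans ((H.compLeft f).trans (.ofEq comp_zero))⟩

lemma disk_mem_dwPerp (M : A) (k : ℤ) : disk M k ∈ dwPerp 𝒳 := fun _ hG =>
  ext1ChVanish_of_forall_nullHomotopic
    (fun _ _ f => nullHomotopic_of_contractible (disk_contractible M k) f) hG

noncomputable def diskMap {M N : A} (g : M ⟶ N) (k : ℤ) : disk M k ⟶ disk N k where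
  f m := if h : m = k ∨ m = k - 1 then (diskXIso M k m h).hom ≫ g ≫ (diskXIso N k m h).inv
    else 0
  comm' a b hab := by
    obtain rfl : b = a - 1 := by simp at hab; omega
    by_cases ha : a = k
    · subst ha
      simp [disk_d rfl rfl]
    · simp [disk_d_eq_zero _ ha]

lemma diskMap_f_of_mem {M N : A} (g : M ⟶ N) {k m : ℤ} (h : m = k ∨ m = k - 1) :
    (diskMap g k).f m = (diskXIso M k m h).hom ≫ g ≫ (diskXIso N k m h).inv :=
  dif_pos h

lemma diskMap_comp_eq_zero {K X M : A} {k : K ⟶ X} {f : X ⟶ M} (hkf : k ≫ f = 0) (j : ℤ) :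
    diskMap k j ≫ diskMap f j = 0 := by
  ext m
  by_cases hm : m = j ∨ m = j - 1
  · simp [diskMap_f_of_mem _ hm, reassoc_of% hkf]
  · exact (isZero_disk_X _ _ _ hm).eq_of_src _ _

lemma EExact.diskMap {K X M : A} {k : K ⟶ X} {f : X ⟶ M} (h : EExact 𝒳 k f) (j m : ℤ) :
    EExact 𝒳 ((diskMap k j).f m) ((diskMap f j).f m) := by
  by_cases hm : m = j ∨ m = j - 1
  · rw [diskMap_f_of_mem _ hm, diskMap_f_of_mem _ hm]
    exact h.of_iso _ _ _
  · exact eexact_of_isZero (isZero_disk_X _ _ _ hm) (isZero_disk_X _ _ _ hm)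
      (isZero_disk_X _ _ _ hm)

-- The map corresponding to `φ` under the adjunction `(-)ₙ ⊣ Dⁿ⁺¹`.
noncomputable def diskLift {X : Cx A} {M : A} {n : ℤ} (φ : X.X n ⟶ M) :
    X ⟶ disk M (n + 1) where
  f m :=
    if h : m = n + 1 then X.d m n ≫ φ ≫ (diskXIso M (n + 1) m (.inl h)).inv
    else if h' : m = n then
      (X.XIsoOfEq h').hom ≫ φ ≫ (diskXIso M (n + 1) m (.inr (by omega))).inv
    else 0
  comm' a b hab := by
    obtain rfl : b = a - 1 := by simp at hab; omega
    by_cases h₁ : a = n + 1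
    · subst h₁
      simp [disk_d rfl rfl]
    · rw [disk_d_eq_zero _ h₁, comp_zero]
      by_cases h₂ : a - 1 = n + 1
      · simp [dif_pos h₂]
      · by_cases h₃ : a - 1 = n
        · omega
        · simp [dif_neg h₂, dif_neg h₃]

lemma diskLift_f_self {X : Cx A} {M : A} {n : ℤ} (φ : X.X n ⟶ M) :
    (diskLift φ).f n = φ ≫ (diskXIso M (n + 1) n (.inr (by omega))).inv := by
  simp [diskLift]

-- The pullback of `Dⁿ⁺¹X ⟶ Dⁿ⁺¹Gₙ ⟵ G` is an extension of `G` by `Dⁿ⁺¹K` which in degree `n`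
-- is `0 → K → X → Gₙ → 0`.
lemma exists_section_of_ext1ChVanish_disk {G : Cx A} {n : ℤ} {K X : A} {k : K ⟶ X}
    {f : X ⟶ G.X n} (hkf : EExact 𝒳 k f) (hG : Ext1ChVanish 𝒳 G (disk K (n + 1))) :
    ∃ s : G.X n ⟶ X, s ≫ f = 𝟙 _ := by
  have sq := IsPullback.of_hasPullback (diskLift (𝟙 (G.X n))) (diskMap f (n + 1))
  let κ : disk K (n + 1) ⟶ pullback (diskLift (𝟙 (G.X n))) (diskMap f (n + 1)) :=
    pullback.lift 0 (diskMap k (n + 1)) (by rw [zero_comp, diskMap_comp_eq_zero hkf.w])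
  have hEE : ChEExact 𝒳 κ (pullback.fst _ _) := fun m =>
    (hkf.diskMap (n + 1) m).of_isPullback (sq.map (eval A _ m))
      (congr_hom (pullback.lift_fst _ _ _) m) (congr_hom (pullback.lift_snd _ _ _) m)
  obtain ⟨r, hr⟩ := hG κ _ hEE
  obtain ⟨-, σ, -, hσ, -⟩ :=
    ShortComplex.Splitting.ofExactOfRetraction _ hEE.shortExact.exact r hr hEE.shortExact.epi_g
  refine ⟨(σ ≫ pullback.snd _ _).f n ≫ (diskXIso X (n + 1) n (.inr (by omega))).hom, ?_⟩
  have := congr_hom (σ ≫= pullback.condition) n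
  rw [reassoc_of% hσ] at this
  rw [← cancel_mono (diskXIso (G.X n) (n + 1) n (.inr (by omega))).inv]
  simpa [diskLift_f_self, diskMap_f_of_mem] using this.symm

lemma mem_dwX_of_forall_ext1ChVanish {𝒴 : Set A} (hbp : BalancedPair 𝒳 𝒴)
    (hadm : Admissible 𝒳 𝒴) {G : Cx A} (h : ∀ C ∈ dwPerp 𝒳, Ext1ChVanish 𝒳 G C) :
    G ∈ dwX 𝒳 := fun n => by
  obtain ⟨X, hX, f, hf⟩ := hbp.contravariantlyFinite (G.X n)
  have := hadm.1 hX f hf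
  obtain ⟨s, hs⟩ := exists_section_of_ext1ChVanish_disk (eexact_kernel_ι f hf)
    (h _ (disk_mem_dwPerp _ (n + 1)))
  exact hbp.summandClosedX hX s f hs

lemma mem_dwX_of_chEExact
    (hsum : ∀ ⦃X S : A⦄, X ∈ 𝒳 → ∀ (s : S ⟶ X) (r : X ⟶ S), s ≫ r = 𝟙 S → S ∈ 𝒳)
    {G' G G'' : Cx A} {i : G' ⟶ G} {p : G ⟶ G''} (hEE : ChEExact 𝒳 i p) (hG : G ∈ dwX 𝒳)
    (hG'' : G'' ∈ dwX 𝒳) : G' ∈ dwX 𝒳 := fun n =>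
  have ⟨r, hr⟩ := (hEE n).exists_retraction (hG'' n)
  hsum (hG n) (i.f n) r hr

lemma mem_dwPerp_of_chEExact {C' C C'' : Cx A} {i : C' ⟶ C} {p : C ⟶ C''}
    (hEE : ChEExact 𝒳 i p) (hC' : C' ∈ dwPerp 𝒳) (hC : C ∈ dwPerp 𝒳) : C'' ∈ dwPerp 𝒳 :=
  fun _ hG => ext1ChVanish_of_forall_nullHomotopic (fun T hT g => by
    obtain ⟨g', rfl⟩ := hEE.exists_lift_of_nullHomotopic hT g
      (nullHomotopic_of_mem_dwPerp hC' (desusp_mem_dwX hT))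
    obtain ⟨H⟩ := nullHomotopic_of_mem_dwPerp hC hT g'
    exact ⟨(H.compRight p).trans (.ofEq zero_comp)⟩) hG

end Complexes

theorem stmt_15_general {A : Type u} [Category.{v} A] [Abelian A]
    (𝒳 𝒴 : Set A) (hbp : BalancedPair 𝒳 𝒴) (hadm : Admissible 𝒳 𝒴) :
    (∀ G : Cx A, (∀ C ∈ dwPerp 𝒳, Ext1ChVanish 𝒳 G C) ↔ G ∈ dwX 𝒳) ∧
    (∀ ⦃G' G G'' : Cx A⦄ (i : G' ⟶ G) (p : G ⟶ G''), ChEExact 𝒳 i p →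
      G ∈ dwX 𝒳 → G'' ∈ dwX 𝒳 → G' ∈ dwX 𝒳) ∧
    (∀ ⦃C' C C'' : Cx A⦄ (i : C' ⟶ C) (p : C ⟶ C''), ChEExact 𝒳 i p →
      C' ∈ dwPerp 𝒳 → C ∈ dwPerp 𝒳 → C'' ∈ dwPerp 𝒳) ∧
    (∀ C : Cx A, C ∈ dwPerp 𝒳 ↔ ∀ G ∈ dwX 𝒳, ∀ f : G ⟶ C, NullHomotopic f) :=
  ⟨fun _ => ⟨mem_dwX_of_forall_ext1ChVanish hbp hadm, fun hG _ hC => hC _ hG⟩,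
    fun _ _ _ _ _ hEE => mem_dwX_of_chEExact hbp.summandClosedX hEE,
    fun _ _ _ _ _ hEE => mem_dwPerp_of_chEExact hEE,
    fun _ => ⟨fun hC _ hG => nullHomotopic_of_mem_dwPerp hC hG,
      fun h _ hG => ext1ChVanish_of_forall_nullHomotopic h hG⟩⟩

/-- `(E-dw X̃, (E-dw X̃)^⊥)` is a hereditary cotorsion pair in `Ch(A, E)`,
and `(E-dw X̃)^⊥` consists exactly of the complexes into which all maps from degreewise-`𝒳`
complexes are null homotopic. -/
theorem stmt_15 {A : Type u} [Category.{v} A] [Abelian A] [HasLimits A] [HasColimits A]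
    (𝒳 𝒴 : Set A) (hbp : BalancedPair 𝒳 𝒴) (hadm : Admissible 𝒳 𝒴) :
    (∀ G : Cx A, (∀ C ∈ dwPerp 𝒳, Ext1ChVanish 𝒳 G C) ↔ G ∈ dwX 𝒳) ∧
    (∀ ⦃G' G G'' : Cx A⦄ (i : G' ⟶ G) (p : G ⟶ G''), ChEExact 𝒳 i p →
      G ∈ dwX 𝒳 → G'' ∈ dwX 𝒳 → G' ∈ dwX 𝒳) ∧
    (∀ ⦃C' C C'' : Cx A⦄ (i : C' ⟶ C) (p : C ⟶ C''), ChEExact 𝒳 i p →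
      C' ∈ dwPerp 𝒳 → C ∈ dwPerp 𝒳 → C'' ∈ dwPerp 𝒳) ∧
    (∀ C : Cx A, C ∈ dwPerp 𝒳 ↔ ∀ G ∈ dwX 𝒳, ∀ f : G ⟶ C, NullHomotopic f) :=
  stmt_15_general 𝒳 𝒴 hbp hadm

end Paper
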